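/- Let L/K be a field extension and let C be an additive K-category such that Hom_C(M,N) is finite-dimensional over K for all objects M, N. Then for all objects N, M of C: N is isomorphic to M in C if and only if N_L is isomorphic to M_L in the extended category C ⊗_K L. -/

import Mathlib

open CategoryTheory CategoryTheory.Limits

noncomputable section

universe w v u

namespace HermCat

variable {C : Type u} [Category.{v} C] [Preadditive C]

/-- A hermitian structure on an additive category `C`: a contravariant additive
functor `*` together with a natural transformation `ω : id → **` satisfying
`(ω_X)* ∘ ω_{X*} = id_{X*}`. -/
structure HermStructure (C : Type u) [Category.{v} C] [Preadditive C] where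
  star : C → C
  starMap : ∀ {X Y : C}, (X ⟶ Y) → (star Y ⟶ star X)
  starMap_id : ∀ X : C, starMap (𝟙 X) = 𝟙 (star X)
  starMap_comp : ∀ {X Y Z : C} (f : X ⟶ Y) (g : Y ⟶ Z),
    starMap (f ≫ g) = starMap g ≫ starMap f
  starMap_add : ∀ {X Y : C} (f g : X ⟶ Y), starMap (f + g) = starMap f + starMap g
  omega : ∀ X : C, X ⟶ star (star X)
  omega_natural : ∀ {X Y : C} (f : X ⟶ Y),
    f ≫ omega Y = omega X ≫ starMap (starMap f)
  omega_star : ∀ X : C, omega (star X) ≫ starMap (omega X) = 𝟙 (star X)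

namespace HermStructure

variable (H : HermStructure C)

/-- The additive-monoid-hom incarnation of `starMap`. -/
def starHom (X Y : C) : (X ⟶ Y) →+ (H.star Y ⟶ H.star X) :=
  AddMonoidHom.mk' H.starMap (fun f g => H.starMap_add f g)

theorem starMap_zero (X Y : C) : H.starMap (0 : X ⟶ Y) = 0 :=
  (H.starHom X Y).map_zero

theorem starMap_neg {X Y : C} (f : X ⟶ Y) : H.starMap (-f) = -H.starMap f :=
  (H.starHom X Y).map_neg f

theorem starMap_sub {X Y : C} (f g : X ⟶ Y) :
    H.starMap (f - g) = H.starMap f - H.starMap g :=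
  (H.starHom X Y).map_sub f g

theorem starMap_nsmul {X Y : C} (n : ℕ) (f : X ⟶ Y) :
    H.starMap (n • f) = n • H.starMap f :=
  (H.starHom X Y).map_nsmul n f

theorem starMap_zsmul {X Y : C} (n : ℤ) (f : X ⟶ Y) :
    H.starMap (n • f) = n • H.starMap f :=
  (H.starHom X Y).map_zsmul n f

/-- An object is reflexive if `ω_X` is an isomorphism. -/
def Reflexive (X : C) : Prop := IsIso (H.omega X)

/-- A sesquilinear form `s : M ⟶ M*` is unimodular if `s` and `s* ∘ ω_M` are
isomorphisms. -/
def IsUnimodular {M : C} (s : M ⟶ H.star M) : Prop :=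
  IsIso s ∧ IsIso (H.omega M ≫ H.starMap s)

/-- A sesquilinear form `s : M ⟶ M*` is `ε`-hermitian if `s = ε • (s* ∘ ω_M)`. -/
def IsEpsHermitian (ε : ℤ) {M : C} (s : M ⟶ H.star M) : Prop :=
  s = ε • (H.omega M ≫ H.starMap s)

/-- `f` is an isometry from `(M, s)` to `(M', s')` if it is an isomorphism with
`s = f* ∘ s' ∘ f`. -/
def IsIsometry {M M' : C} (s : M ⟶ H.star M) (s' : M' ⟶ H.star M')
    (f : M ⟶ M') : Prop :=
  IsIso f ∧ s = f ≫ s' ≫ H.starMap f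

/-- Two sesquilinear forms are isometric if there is an isometry between them. -/
def Isometric {M M' : C} (s : M ⟶ H.star M) (s' : M' ⟶ H.star M') : Prop :=
  ∃ f : M ⟶ M', H.IsIsometry s s' f

section Biprod

variable [HasBinaryBiproducts C]

/-- The underlying object `Q ⊕ Q*` of the hyperbolic form. -/
def hypObj (Q : C) : C := Q ⊞ H.star Q

/-- The hyperbolic `ε`-hermitian form `H_ε(Q)` on `Q ⊕ Q*`, given in matrix form
by `[[0, id_{Q*}], [ε·ω_Q, 0]]` (composed with the canonical identification
`Q* ⊕ Q** ≅ (Q ⊕ Q*)*`). -/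
def hypForm (ε : ℤ) (Q : C) : H.hypObj Q ⟶ H.star (H.hypObj Q) :=
  biprod.lift (biprod.snd) (ε • (biprod.fst ≫ H.omega Q)) ≫
    biprod.desc (H.starMap biprod.fst) (H.starMap biprod.snd)

/-- A form is hyperbolic (as a unimodular `ε`-hermitian form) if it is isometric
to `(Q ⊕ Q*, H_ε(Q))` for some reflexive object `Q`. -/
def IsHyperbolic (ε : ℤ) {M : C} (s : M ⟶ H.star M) : Prop :=
  ∃ Q : C, H.Reflexive Q ∧ H.Isometric s (H.hypForm ε Q)

/-- The orthogonal sum of two sesquilinear forms. -/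
def orthSum {M M' : C} (s : M ⟶ H.star M) (s' : M' ⟶ H.star M') :
    M ⊞ M' ⟶ H.star (M ⊞ M') :=
  biprod.desc (s ≫ H.starMap biprod.fst) (s' ≫ H.starMap biprod.snd)

/-- The "split" form `[[0, f], [g, 0]]` on `M ⊕ N`, where `f : N ⟶ M*` and
`g : M ⟶ N*`. -/
def splitForm {M N : C} (f : N ⟶ H.star M) (g : M ⟶ H.star N) :
    M ⊞ N ⟶ H.star (M ⊞ N) :=
  biprod.desc (g ≫ H.starMap biprod.snd) (f ≫ H.starMap biprod.fst)

end Biprod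

end HermStructure

/-! ## The category of twisted double arrows -/

variable {ι : Type w}

/-- Objects of the category `TDA_I(C)` of twisted double `I`-arrows: quadruples
`(M, N, {f_i}, {g_i})` with `f_i, g_i : M ⟶ N^{*_i}`. -/
structure TDAObj (Hs : ι → HermStructure C) : Type (max u v w) where
  M : C
  N : C
  f : ∀ i, M ⟶ (Hs i).star N
  g : ∀ i, M ⟶ (Hs i).star N

namespace TDAObj

variable {Hs : ι → HermStructure C}

/-- Morphisms `(M,N,{f_i},{g_i}) ⟶ (M',N',{f'_i},{g'_i})` in `TDA_I(C)`: pairs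
`(φ, ψ^op)` with `φ : M ⟶ M'`, `ψ : N' ⟶ N`, `f'_i ∘ φ = ψ^{*_i} ∘ f_i` and
`g'_i ∘ φ = ψ^{*_i} ∘ g_i`. -/
@[ext]
structure Hom (Z Z' : TDAObj Hs) : Type v where
  φ : Z.M ⟶ Z'.M
  ψ : Z'.N ⟶ Z.N
  condf : ∀ i, φ ≫ Z'.f i = Z.f i ≫ (Hs i).starMap ψ
  condg : ∀ i, φ ≫ Z'.g i = Z.g i ≫ (Hs i).starMap ψ

instance category : Category (TDAObj Hs) where
  Hom := Hom
  id Z := ⟨𝟙 Z.M, 𝟙 Z.N, fun i => by simp [(Hs i).starMap_id],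
    fun i => by simp [(Hs i).starMap_id]⟩
  comp {Z Z' Z''} u v := ⟨u.φ ≫ v.φ, v.ψ ≫ u.ψ,
    fun i => by
      rw [Category.assoc, v.condf i, ← Category.assoc, u.condf i, (Hs i).starMap_comp,
        Category.assoc],
    fun i => by
      rw [Category.assoc, v.condg i, ← Category.assoc, u.condg i, (Hs i).starMap_comp,
        Category.assoc]⟩
  id_comp u := by apply Hom.ext <;> simp
  comp_id u := by apply Hom.ext <;> simp
  assoc u v w := by apply Hom.ext <;> simp

@[simp] theorem id_φ (Z : TDAObj Hs) : Hom.φ (𝟙 Z) = 𝟙 Z.M := rfl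
@[simp] theorem id_ψ (Z : TDAObj Hs) : Hom.ψ (𝟙 Z) = 𝟙 Z.N := rfl
@[simp] theorem comp_φ {Z Z' Z'' : TDAObj Hs} (u : Z ⟶ Z') (v : Z' ⟶ Z'') :
    (u ≫ v).φ = u.φ ≫ v.φ := rfl
@[simp] theorem comp_ψ {Z Z' Z'' : TDAObj Hs} (u : Z ⟶ Z') (v : Z' ⟶ Z'') :
    (u ≫ v).ψ = v.ψ ≫ u.ψ := rfl

theorem hom_ext {Z Z' : TDAObj Hs} {u v : Z ⟶ Z'} (h1 : Hom.φ u = Hom.φ v)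
    (h2 : Hom.ψ u = Hom.ψ v) : u = v := Hom.ext h1 h2

instance homZero (Z Z' : TDAObj Hs) : Zero (Z ⟶ Z') :=
  ⟨⟨0, 0, fun i => by simp [(Hs i).starMap_zero], fun i => by simp [(Hs i).starMap_zero]⟩⟩

instance homAdd (Z Z' : TDAObj Hs) : Add (Z ⟶ Z') :=
  ⟨fun u v => ⟨u.φ + v.φ, u.ψ + v.ψ,
    fun i => by simp [Preadditive.add_comp, Preadditive.comp_add, (Hs i).starMap_add,
      u.condf i, v.condf i],
    fun i => by simp [Preadditive.add_comp, Preadditive.comp_add, (Hs i).starMap_add,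
      u.condg i, v.condg i]⟩⟩

instance homNeg (Z Z' : TDAObj Hs) : Neg (Z ⟶ Z') :=
  ⟨fun u => ⟨-u.φ, -u.ψ,
    fun i => by simp [Preadditive.neg_comp, Preadditive.comp_neg, (Hs i).starMap_neg,
      u.condf i],
    fun i => by simp [Preadditive.neg_comp, Preadditive.comp_neg, (Hs i).starMap_neg,
      u.condg i]⟩⟩

instance homSub (Z Z' : TDAObj Hs) : Sub (Z ⟶ Z') :=
  ⟨fun u v => ⟨u.φ - v.φ, u.ψ - v.ψ,
    fun i => by simp [Preadditive.sub_comp, Preadditive.comp_sub, (Hs i).starMap_sub,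
      u.condf i, v.condf i],
    fun i => by simp [Preadditive.sub_comp, Preadditive.comp_sub, (Hs i).starMap_sub,
      u.condg i, v.condg i]⟩⟩

instance homSMulNat (Z Z' : TDAObj Hs) : SMul ℕ (Z ⟶ Z') :=
  ⟨fun n u => ⟨n • u.φ, n • u.ψ,
    fun i => by simp [Preadditive.nsmul_comp, Preadditive.comp_nsmul, (Hs i).starMap_nsmul,
      u.condf i],
    fun i => by simp [Preadditive.nsmul_comp, Preadditive.comp_nsmul, (Hs i).starMap_nsmul,
      u.condg i]⟩⟩

instance homSMulInt (Z Z' : TDAObj Hs) : SMul ℤ (Z ⟶ Z') :=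
  ⟨fun n u => ⟨n • u.φ, n • u.ψ,
    fun i => by simp [Preadditive.zsmul_comp, Preadditive.comp_zsmul, (Hs i).starMap_zsmul,
      u.condf i],
    fun i => by simp [Preadditive.zsmul_comp, Preadditive.comp_zsmul, (Hs i).starMap_zsmul,
      u.condg i]⟩⟩

@[simp] theorem add_φ {Z Z' : TDAObj Hs} (u v : Z ⟶ Z') : (u + v).φ = u.φ + v.φ := rfl
@[simp] theorem add_ψ {Z Z' : TDAObj Hs} (u v : Z ⟶ Z') : (u + v).ψ = u.ψ + v.ψ := rfl
@[simp] theorem zero_φ {Z Z' : TDAObj Hs} : (0 : Z ⟶ Z').φ = 0 := rfl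
@[simp] theorem zero_ψ {Z Z' : TDAObj Hs} : (0 : Z ⟶ Z').ψ = 0 := rfl
@[simp] theorem neg_φ {Z Z' : TDAObj Hs} (u : Z ⟶ Z') : (-u).φ = -u.φ := rfl
@[simp] theorem neg_ψ {Z Z' : TDAObj Hs} (u : Z ⟶ Z') : (-u).ψ = -u.ψ := rfl

instance homAddCommGroup (Z Z' : TDAObj Hs) : AddCommGroup (Z ⟶ Z') :=
  Function.Injective.addCommGroup (fun u => (Hom.φ u, Hom.ψ u))
    (fun u v h => by
      apply hom_ext
      · exact congrArg Prod.fst h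
      · exact congrArg Prod.snd h)
    rfl (fun _ _ => rfl) (fun _ => rfl) (fun _ _ => rfl) (fun _ _ => rfl) (fun _ _ => rfl)

instance preadditive : Preadditive (TDAObj Hs) where
  add_comp Z Z' Z'' u u' v := by apply hom_ext <;> simp
  comp_add Z Z' Z'' u v v' := by apply hom_ext <;> simp

end TDAObj

/-- The hermitian structure on the category of twisted double `I`-arrows. -/
def tdaHerm (Hs : ι → HermStructure C) : HermStructure (TDAObj Hs) where
  star Z := ⟨Z.N, Z.M, fun i => (Hs i).omega Z.N ≫ (Hs i).starMap (Z.g i),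
    fun i => (Hs i).omega Z.N ≫ (Hs i).starMap (Z.f i)⟩
  starMap {Z Z'} u := ⟨u.ψ, u.φ,
    fun i => by
      rw [← Category.assoc, (Hs i).omega_natural u.ψ, Category.assoc, Category.assoc,
        ← (Hs i).starMap_comp, ← u.condg i, (Hs i).starMap_comp],
    fun i => by
      rw [← Category.assoc, (Hs i).omega_natural u.ψ, Category.assoc, Category.assoc,
        ← (Hs i).starMap_comp, ← u.condf i, (Hs i).starMap_comp]⟩
  starMap_id Z := by apply TDAObj.hom_ext <;> rfl
  starMap_comp u v := by apply TDAObj.hom_ext <;> rfl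
  starMap_add u v := by apply TDAObj.hom_ext <;> rfl
  omega Z := ⟨𝟙 Z.M, 𝟙 Z.N,
    fun i => by
      simp only [Category.id_comp, (Hs i).starMap_id, Category.comp_id]
      rw [(Hs i).starMap_comp, ← Category.assoc, ← (Hs i).omega_natural (Z.f i),
        Category.assoc, (Hs i).omega_star, Category.comp_id],
    fun i => by
      simp only [Category.id_comp, (Hs i).starMap_id, Category.comp_id]
      rw [(Hs i).starMap_comp, ← Category.assoc, ← (Hs i).omega_natural (Z.g i),
        Category.assoc, (Hs i).omega_star, Category.comp_id]⟩
  omega_natural u := by apply TDAObj.hom_ext <;> simp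
  omega_star Z := by apply TDAObj.hom_ext <;> simp

/-! ## Biproducts in `TDA_I(C)` -/

namespace TDAObj

variable {Hs : ι → HermStructure C} [HasBinaryBiproducts C]

/-- The biproduct of two objects of `TDA_I(C)`. -/
def biprodObj (Z W : TDAObj Hs) : TDAObj Hs where
  M := Z.M ⊞ W.M
  N := Z.N ⊞ W.N
  f i := biprod.desc (Z.f i ≫ (Hs i).starMap biprod.fst) (W.f i ≫ (Hs i).starMap biprod.snd)
  g i := biprod.desc (Z.g i ≫ (Hs i).starMap biprod.fst) (W.g i ≫ (Hs i).starMap biprod.snd)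

/-- The binary bicone exhibiting `biprodObj Z W` as a biproduct. -/
def biprodBicone (Z W : TDAObj Hs) : BinaryBicone Z W where
  pt := biprodObj Z W
  fst := ⟨biprod.fst, biprod.inl,
    fun i => by
      apply biprod.hom_ext' <;>
      simp [biprodObj, ← (Hs i).starMap_comp, (Hs i).starMap_zero, (Hs i).starMap_id],
    fun i => by
      apply biprod.hom_ext' <;>
      simp [biprodObj, ← (Hs i).starMap_comp, (Hs i).starMap_zero, (Hs i).starMap_id]⟩
  snd := ⟨biprod.snd, biprod.inr,
    fun i => by
      apply biprod.hom_ext' <;>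
      simp [biprodObj, ← (Hs i).starMap_comp, (Hs i).starMap_zero, (Hs i).starMap_id],
    fun i => by
      apply biprod.hom_ext' <;>
      simp [biprodObj, ← (Hs i).starMap_comp, (Hs i).starMap_zero, (Hs i).starMap_id]⟩
  inl := ⟨biprod.inl, biprod.fst,
    fun i => by simp [biprodObj],
    fun i => by simp [biprodObj]⟩
  inr := ⟨biprod.inr, biprod.snd,
    fun i => by simp [biprodObj],
    fun i => by simp [biprodObj]⟩
  inl_fst := by apply hom_ext <;> first | exact biprod.inl_fst | exact biprod.inl_snd | exact biprod.inr_fst | exact biprod.inr_snd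
  inl_snd := by apply hom_ext <;> first | exact biprod.inl_fst | exact biprod.inl_snd | exact biprod.inr_fst | exact biprod.inr_snd
  inr_fst := by apply hom_ext <;> first | exact biprod.inl_fst | exact biprod.inl_snd | exact biprod.inr_fst | exact biprod.inr_snd
  inr_snd := by apply hom_ext <;> first | exact biprod.inl_fst | exact biprod.inl_snd | exact biprod.inr_fst | exact biprod.inr_snd

instance hasBinaryBiproducts : HasBinaryBiproducts (TDAObj Hs) where
  has_binary_biproduct Z W :=
    hasBinaryBiproduct_of_total (biprodBicone Z W) (by apply hom_ext <;> exact biprod.total)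

end TDAObj

/-! ## Isomorphisms in `TDA_I(C)` -/

namespace TDAObj

variable {Hs : ι → HermStructure C}

theorem isIso_of {Z Z' : TDAObj Hs} (u : Z ⟶ Z') (h1 : IsIso u.φ) (h2 : IsIso u.ψ) :
    IsIso u := by
  refine ⟨⟨⟨inv u.φ, inv u.ψ, fun i => ?_, fun i => ?_⟩, ?_, ?_⟩⟩
  · have h := u.condf i
    have : Z'.f i = inv u.φ ≫ Z.f i ≫ (Hs i).starMap u.ψ := by
      rw [← h, IsIso.inv_hom_id_assoc]
    rw [this, Category.assoc, Category.assoc, ← (Hs i).starMap_comp,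
      IsIso.inv_hom_id, (Hs i).starMap_id, Category.comp_id]
  · have h := u.condg i
    have : Z'.g i = inv u.φ ≫ Z.g i ≫ (Hs i).starMap u.ψ := by
      rw [← h, IsIso.inv_hom_id_assoc]
    rw [this, Category.assoc, Category.assoc, ← (Hs i).starMap_comp,
      IsIso.inv_hom_id, (Hs i).starMap_id, Category.comp_id]
  · apply hom_ext <;> simp
  · apply hom_ext <;> simp

end TDAObj

/-! ## Categories of (systems of) sesquilinear forms -/

/-- Objects of the category `Sesq(C)` of sesquilinear forms over `(C, H)`. -/
structure FormObj (H : HermStructure C) : Type (max u v) where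
  pt : C
  form : pt ⟶ H.star pt

namespace FormObj

variable {H : HermStructure C}

/-- `Sesq(C)`: morphisms are isometries. -/
instance category : Category (FormObj H) where
  Hom X Y := { f : X.pt ⟶ Y.pt // H.IsIsometry X.form Y.form f }
  id X := ⟨𝟙 X.pt, inferInstance, by simp [H.starMap_id]⟩
  comp {X Y Z} u v := ⟨u.1 ≫ v.1, by
    obtain ⟨uf, hu1, hu2⟩ := u
    obtain ⟨vf, hv1, hv2⟩ := v
    haveI := hu1; haveI := hv1
    refine ⟨inferInstance, ?_⟩
    show X.form = (uf ≫ vf) ≫ Z.form ≫ H.starMap (uf ≫ vf)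
    rw [hu2, hv2, H.starMap_comp]
    simp⟩
  id_comp u := by apply Subtype.ext; simp
  comp_id u := by apply Subtype.ext; simp
  assoc u v w := by apply Subtype.ext; simp

@[simp] theorem id_val (X : FormObj H) : (𝟙 X : X ⟶ X).1 = 𝟙 X.pt := rfl
@[simp] theorem comp_val {X Y Z : FormObj H} (u : X ⟶ Y) (v : Y ⟶ Z) :
    (u ≫ v).1 = u.1 ≫ v.1 := rfl

end FormObj

/-- The predicate selecting unimodular `ε`-hermitian forms. -/
def hermPred (H : HermStructure C) (ε : ℤ) : FormObj H → Prop :=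
  fun X => H.IsUnimodular X.form ∧ H.IsEpsHermitian ε X.form

/-- The category `Herm_ε(C)` of unimodular `ε`-hermitian forms over `(C, H)`. -/
abbrev HermFormCat (H : HermStructure C) (ε : ℤ) := ObjectProperty.FullSubcategory (hermPred H ε)

/-- Objects of the category of systems of sesquilinear forms over `(C, {(*_i, ω_i)})`. -/
structure SysFormObj (Hs : ι → HermStructure C) : Type (max u v w) where
  pt : C
  form : ∀ i, pt ⟶ (Hs i).star pt

namespace SysFormObj

variable {Hs : ι → HermStructure C}

/-- `f` is an isometry of systems of sesquilinear forms. -/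
def IsIsometry (X Y : SysFormObj Hs) (f : X.pt ⟶ Y.pt) : Prop :=
  IsIso f ∧ ∀ i, X.form i = f ≫ Y.form i ≫ (Hs i).starMap f

/-- Two systems of sesquilinear forms are isometric. -/
def Isometric (X Y : SysFormObj Hs) : Prop := ∃ f, IsIsometry X Y f

/-- The category of systems of sesquilinear forms, with isometries as morphisms. -/
instance category : Category (SysFormObj Hs) where
  Hom X Y := { f : X.pt ⟶ Y.pt // IsIsometry X Y f }
  id X := ⟨𝟙 X.pt, inferInstance, fun i => by simp [(Hs i).starMap_id]⟩
  comp {X Y Z} u v := ⟨u.1 ≫ v.1, by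
    obtain ⟨uf, hu1, hu2⟩ := u
    obtain ⟨vf, hv1, hv2⟩ := v
    haveI := hu1; haveI := hv1
    refine ⟨inferInstance, fun i => ?_⟩
    show X.form i = (uf ≫ vf) ≫ Z.form i ≫ (Hs i).starMap (uf ≫ vf)
    rw [hu2 i, hv2 i, (Hs i).starMap_comp]
    simp⟩
  id_comp u := by apply Subtype.ext; simp
  comp_id u := by apply Subtype.ext; simp
  assoc u v w := by apply Subtype.ext; simp

/-- The orthogonal sum of two systems of sesquilinear forms. -/
def orthSum [HasBinaryBiproducts C] (X Y : SysFormObj Hs) : SysFormObj Hs where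
  pt := X.pt ⊞ Y.pt
  form i := biprod.desc (X.form i ≫ (Hs i).starMap biprod.fst)
    (Y.form i ≫ (Hs i).starMap biprod.snd)

end SysFormObj

/-! ## The functor `F` from (systems of) sesquilinear forms to hermitian forms over `TDA` -/

section FFunctor

variable {Hs : ι → HermStructure C}

theorem HermStructure.omega_starMap_key (H : HermStructure C) {M : C}
    (s : M ⟶ H.star M) :
    H.omega M ≫ H.starMap (H.omega M ≫ H.starMap s) = s := by
  rw [H.starMap_comp, ← Category.assoc, ← H.omega_natural s, Category.assoc,
    H.omega_star, Category.comp_id]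

/-- The twisted double arrow `Z(M, {s_i}) = (M, M, {s_i^* ∘ ω_M}, {s_i})` associated with a
system of sesquilinear forms. -/
def sysZ {M : C} (s : ∀ i, M ⟶ (Hs i).star M) : TDAObj Hs :=
  ⟨M, M, fun i => (Hs i).omega M ≫ (Hs i).starMap (s i), fun i => s i⟩

/-- The canonical `1`-hermitian form `(id_M, id_M^op)` on `Z(M, {s_i})`. -/
def sysZForm {M : C} (s : ∀ i, M ⟶ (Hs i).star M) :
    sysZ s ⟶ (tdaHerm Hs).star (sysZ s) :=
  ⟨𝟙 M, 𝟙 M,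
    fun i => by
      simp only [tdaHerm, sysZ, Category.id_comp, (Hs i).starMap_id, Category.comp_id],
    fun i => by
      simp only [tdaHerm, sysZ, Category.id_comp, (Hs i).starMap_id, Category.comp_id]
      rw [(Hs i).omega_starMap_key]⟩

theorem sysZForm_isIso {M : C} (s : ∀ i, M ⟶ (Hs i).star M) : IsIso (sysZForm s) :=
  TDAObj.isIso_of (sysZForm s) (inferInstanceAs (IsIso (𝟙 M)))
    (inferInstanceAs (IsIso (𝟙 M)))

theorem sysZForm_unimodular {M : C} (s : ∀ i, M ⟶ (Hs i).star M) :
    (tdaHerm Hs).IsUnimodular (sysZForm s) := by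
  constructor
  · exact sysZForm_isIso s
  · exact TDAObj.isIso_of _ (inferInstanceAs (IsIso (𝟙 M ≫ 𝟙 M)))
      (inferInstanceAs (IsIso (𝟙 M ≫ 𝟙 M)))

theorem sysZForm_hermitian {M : C} (s : ∀ i, M ⟶ (Hs i).star M) :
    (tdaHerm Hs).IsEpsHermitian 1 (sysZForm s) := by
  apply TDAObj.hom_ext <;> simp [tdaHerm, sysZForm] <;> erw [one_smul] <;>
    exact (Category.comp_id _).symm

/-- The object part of the functor `F`. -/
def Fobj (X : SysFormObj Hs) : HermFormCat (tdaHerm Hs) 1 :=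
  ⟨⟨sysZ X.form, sysZForm X.form⟩, ⟨sysZForm_unimodular X.form, sysZForm_hermitian X.form⟩⟩

/-- The map part of the functor `F`. -/
def Fmap {X Y : SysFormObj Hs} (u : X ⟶ Y) : Fobj X ⟶ Fobj Y := by
  haveI := u.2.1
  refine ⟨⟨⟨u.1, (inv u.1 : Y.pt ⟶ X.pt), fun i => ?_, fun i => ?_⟩, ?_, ?_⟩⟩
  · show u.1 ≫ (Hs i).omega Y.pt ≫ (Hs i).starMap (Y.form i) =
      ((Hs i).omega X.pt ≫ (Hs i).starMap (X.form i)) ≫ (Hs i).starMap (inv u.1)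
    calc u.1 ≫ (Hs i).omega Y.pt ≫ (Hs i).starMap (Y.form i)
        = (Hs i).omega X.pt ≫ (Hs i).starMap ((Hs i).starMap u.1) ≫
            (Hs i).starMap (Y.form i) := by
          rw [← Category.assoc, (Hs i).omega_natural u.1, Category.assoc]
      _ = (Hs i).omega X.pt ≫ (Hs i).starMap (Y.form i ≫ (Hs i).starMap u.1) := by
          rw [(Hs i).starMap_comp]
      _ = (Hs i).omega X.pt ≫ (Hs i).starMap (inv u.1 ≫ X.form i) := by
          rw [u.2.2 i, IsIso.inv_hom_id_assoc]
      _ = ((Hs i).omega X.pt ≫ (Hs i).starMap (X.form i)) ≫ (Hs i).starMap (inv u.1) := by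
          rw [(Hs i).starMap_comp, Category.assoc]
  · show u.1 ≫ Y.form i = X.form i ≫ (Hs i).starMap (inv u.1)
    rw [u.2.2 i, Category.assoc, Category.assoc, ← (Hs i).starMap_comp,
      IsIso.inv_hom_id, (Hs i).starMap_id, Category.comp_id]
  · exact TDAObj.isIso_of _ (by show IsIso u.1; infer_instance)
      (by show IsIso (inv u.1); infer_instance)
  · apply TDAObj.hom_ext
    · show 𝟙 X.pt = u.1 ≫ 𝟙 Y.pt ≫ inv u.1
      simp
    · show 𝟙 X.pt = (u.1 ≫ 𝟙 Y.pt) ≫ inv u.1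
      simp

/-- The functor `F` from systems of sesquilinear forms over `(C, {(*_i, ω_i)})` to
unimodular `1`-hermitian forms over `TDA_I(C)`, given by
`F(M, {s_i}) = ((M, M, {s_i^{*_i} ∘ ω_{i,M}}, {s_i}), (id_M, id_M^op))` and
`F(ψ) = (ψ, (ψ⁻¹)^op)`. -/
def Ffunctor (Hs : ι → HermStructure C) : SysFormObj Hs ⥤ HermFormCat (tdaHerm Hs) 1 where
  obj := Fobj
  map := Fmap
  map_id X := by
    haveI : IsIso ((𝟙 X : X ⟶ X).1) := (𝟙 X : X ⟶ X).2.1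
    apply ObjectProperty.hom_ext; apply Subtype.ext; apply TDAObj.hom_ext
    · rfl
    · show inv ((𝟙 X : X ⟶ X).1) = 𝟙 X.pt
      change inv (𝟙 X.pt) = 𝟙 X.pt
      simp
  map_comp {X Y Z} u v := by
    haveI := u.2.1; haveI := v.2.1
    haveI : IsIso ((u ≫ v).1) := (u ≫ v).2.1
    apply ObjectProperty.hom_ext; apply Subtype.ext; apply TDAObj.hom_ext
    · rfl
    · show inv ((u ≫ v).1) = inv v.1 ≫ inv u.1
      change inv (u.1 ≫ v.1) = inv v.1 ≫ inv u.1
      simp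

end FFunctor

end HermCat

/-! ## Scalar extension of linear categories -/

namespace HermCat

open TensorProduct

universe rv ku

/-- Objects of the scalar extension `C ⊗_K R`: formal symbols `M_R` for `M ∈ C`. -/
structure ExtObj (K : Type ku) (R : Type rv) (C : Type u) : Type u where
  base : C

section Extension

variable (K : Type ku) [CommRing K] (R : Type rv) [CommRing R] [Algebra K R]
variable {C : Type u} [Category.{v} C] [Preadditive C] [CategoryTheory.Linear K C]

/-- Composition as a `K`-bilinear map. -/
def compBil (X Y Z : C) : (X ⟶ Y) →ₗ[K] (Y ⟶ Z) →ₗ[K] (X ⟶ Z) :=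
  LinearMap.mk₂ K (fun f g => f ≫ g)
    (fun f f' g => Preadditive.add_comp _ _ _ f f' g)
    (fun c f g => CategoryTheory.Linear.smul_comp _ _ _ c f g)
    (fun f g g' => Preadditive.comp_add _ _ _ f g g')
    (fun c f g => CategoryTheory.Linear.comp_smul _ _ _ f c g)

/-- The extension of a `K`-bilinear map to the scalar extensions by `R`,
`(m ⊗ a, n ⊗ b) ↦ B m n ⊗ ab`. -/
def tensorBil {M N P : Type*} [AddCommGroup M] [AddCommGroup N] [AddCommGroup P]
    [Module K M] [Module K N] [Module K P] (B : M →ₗ[K] N →ₗ[K] P) :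
    M ⊗[K] R →ₗ[K] N ⊗[K] R →ₗ[K] P ⊗[K] R :=
  TensorProduct.lift (LinearMap.mk₂ K
    (fun m a => TensorProduct.lift (LinearMap.mk₂ K (fun n b => B m n ⊗ₜ[K] (a * b))
      (fun n n' b => by (try dsimp only); rw [map_add, add_tmul])
      (fun c n b => by (try dsimp only); rw [map_smul, smul_tmul'])
      (fun n b b' => by (try dsimp only); rw [mul_add, tmul_add])
      (fun c n b => by (try dsimp only); rw [mul_smul_comm, tmul_smul])))
    (fun m m' a => by
      apply TensorProduct.ext'
      intro n b
      simp [map_add, add_tmul])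
    (fun c m a => by
      apply TensorProduct.ext'
      intro n b
      simp [map_smul, smul_tmul'])
    (fun m a a' => by
      apply TensorProduct.ext'
      intro n b
      simp [add_mul, tmul_add])
    (fun c m a => by
      apply TensorProduct.ext'
      intro n b
      simp [smul_mul_assoc, tmul_smul]))

/-- The category `C ⊗_K R` with `Hom(M_R, N_R) = Hom_C(M, N) ⊗_K R`. -/
instance ExtObj.category : Category.{max v rv} (ExtObj K R C) where
  Hom X Y := (X.base ⟶ Y.base) ⊗[K] R
  id X := 𝟙 X.base ⊗ₜ[K] 1
  comp {X Y Z} f g := tensorBil K R (compBil K X.base Y.base Z.base) f g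
  id_comp {X Y} f := by
    induction f using TensorProduct.induction_on with
    | zero => simp [map_zero]
    | tmul u a =>
      show tensorBil K R _ (𝟙 X.base ⊗ₜ[K] 1) (u ⊗ₜ[K] a) = u ⊗ₜ[K] a
      rw [tensorBil]
      simp [compBil]
    | add f g hf hg =>
      show tensorBil K R _ _ (f + g) = f + g
      rw [map_add]
      exact congrArg₂ (· + ·) hf hg
  comp_id {X Y} f := by
    induction f using TensorProduct.induction_on with
    | zero => simp [map_zero]
    | tmul u a =>
      show tensorBil K R _ (u ⊗ₜ[K] a) (𝟙 Y.base ⊗ₜ[K] 1) = u ⊗ₜ[K] a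
      rw [tensorBil]
      simp [compBil]
    | add f g hf hg =>
      show tensorBil K R _ (f + g) _ = f + g
      rw [map_add, LinearMap.add_apply]
      exact congrArg₂ (· + ·) hf hg
  assoc {W X Y Z} f g h := by
    show tensorBil K R _ (tensorBil K R _ f g) h = tensorBil K R _ f (tensorBil K R _ g h)
    induction f using TensorProduct.induction_on with
    | zero => simp only [map_zero, LinearMap.zero_apply]
    | tmul u a =>
      induction g using TensorProduct.induction_on with
      | zero => simp only [map_zero, LinearMap.zero_apply]
      | tmul v b =>
        induction h using TensorProduct.induction_on with
        | zero => simp only [map_zero, LinearMap.zero_apply]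
        | tmul w c =>
          simp only [tensorBil, lift.tmul, LinearMap.mk₂_apply, compBil,
            Category.assoc, mul_assoc]
        | add h1 h2 ih1 ih2 =>
          simp only [map_add, LinearMap.add_apply] at ih1 ih2 ⊢
          rw [ih1, ih2]
      | add g1 g2 ih1 ih2 =>
        simp only [map_add, LinearMap.add_apply] at ih1 ih2 ⊢
        rw [ih1, ih2]
    | add f1 f2 ih1 ih2 =>
      simp only [map_add, LinearMap.add_apply] at ih1 ih2 ⊢
      rw [ih1, ih2]

instance ExtObj.homAddCommGroup (X Y : ExtObj K R C) : AddCommGroup (X ⟶ Y) :=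
  inferInstanceAs (AddCommGroup ((X.base ⟶ Y.base) ⊗[K] R))

instance ExtObj.homModule (X Y : ExtObj K R C) : Module K (X ⟶ Y) :=
  inferInstanceAs (Module K ((X.base ⟶ Y.base) ⊗[K] R))

instance ExtObj.preadditive : Preadditive (ExtObj K R C) where
  add_comp X Y Z f f' g := by
    show tensorBil K R _ (f + f') g = tensorBil K R _ f g + tensorBil K R _ f' g
    rw [map_add, LinearMap.add_apply]
  comp_add X Y Z f g g' := by
    show tensorBil K R _ f (g + g') = tensorBil K R _ f g + tensorBil K R _ f g'
    rw [map_add]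

instance ExtObj.linear : CategoryTheory.Linear K (ExtObj K R C) where
  smul_comp X Y Z c f g := by
    show tensorBil K R _ (c • f) g = c • tensorBil K R _ f g
    rw [map_smul, LinearMap.smul_apply]
  comp_smul X Y Z f c g := by
    show tensorBil K R _ f (c • g) = c • tensorBil K R _ f g
    rw [map_smul]

/-- The scalar extension functor `C → C ⊗_K R`, `M ↦ M_R`, `f ↦ f ⊗ 1`. -/
def extFunctor : C ⥤ ExtObj K R C where
  obj M := ⟨M⟩
  map f := f ⊗ₜ[K] 1
  map_id M := rfl
  map_comp {X Y Z} f g := by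
    show (f ≫ g) ⊗ₜ[K] 1 = tensorBil K R _ (f ⊗ₜ[K] 1) (g ⊗ₜ[K] 1)
    rw [tensorBil]
    simp [compBil]

/-- A hermitian structure is `K`-linear if `*` is `K`-linear on Hom-modules. -/
class HermKLinear (H : HermStructure C) : Prop where
  starMap_smul : ∀ (a : K) ⦃X Y : C⦄ (f : X ⟶ Y), H.starMap (a • f) = a • H.starMap f

/-- `starMap` as a `K`-linear map. -/
def starLin (H : HermStructure C) [hH : HermKLinear K H] (X Y : C) :
    (X ⟶ Y) →ₗ[K] (H.star Y ⟶ H.star X) where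
  toFun := H.starMap
  map_add' f g := H.starMap_add f g
  map_smul' a f := hH.starMap_smul a f

/-- The extension of a `K`-linear hermitian structure on `C` to `C ⊗_K R`:
`(M_R)* = (M*)_R`, `(f ⊗ a)* = f* ⊗ a`, `ω_{M_R} = ω_M ⊗ 1`. -/
def extHerm (H : HermStructure C) [HermKLinear K H] :
    HermStructure (ExtObj K R C) where
  star X := ⟨H.star X.base⟩
  starMap {X Y} f := TensorProduct.map (starLin K H X.base Y.base) LinearMap.id f
  starMap_id X := by
    show TensorProduct.map _ _ (𝟙 X.base ⊗ₜ[K] 1) = 𝟙 (H.star X.base) ⊗ₜ[K] 1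
    rw [TensorProduct.map_tmul]
    simp [starLin, H.starMap_id]
  starMap_comp {X Y Z} f g := by
    show TensorProduct.map (starLin K H X.base Z.base) LinearMap.id (tensorBil K R _ f g) =
      tensorBil K R _ (TensorProduct.map (starLin K H Y.base Z.base) LinearMap.id g)
        (TensorProduct.map (starLin K H X.base Y.base) LinearMap.id f)
    induction f using TensorProduct.induction_on with
    | zero => simp only [map_zero, LinearMap.zero_apply, LinearMap.map_zero]
    | tmul u a =>
      induction g using TensorProduct.induction_on with
      | zero => simp only [map_zero, LinearMap.zero_apply, LinearMap.map_zero]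
      | tmul v b =>
        simp only [tensorBil, lift.tmul, LinearMap.mk₂_apply, TensorProduct.map_tmul,
          compBil]
        simp [starLin, H.starMap_comp, mul_comm]
      | add g1 g2 ih1 ih2 =>
        simp only [map_add, LinearMap.add_apply] at ih1 ih2 ⊢
        rw [ih1, ih2]
    | add f1 f2 ih1 ih2 =>
      simp only [map_add, LinearMap.add_apply] at ih1 ih2 ⊢
      rw [ih1, ih2]
  starMap_add f g := by (try dsimp only); rw [map_add]
  omega X := H.omega X.base ⊗ₜ[K] 1
  omega_natural {X Y} f := by
    show tensorBil K R _ f (H.omega Y.base ⊗ₜ[K] 1) =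
      tensorBil K R _ (H.omega X.base ⊗ₜ[K] 1)
        (TensorProduct.map (starLin K H _ _) LinearMap.id
          (TensorProduct.map (starLin K H _ _) LinearMap.id f))
    induction f using TensorProduct.induction_on with
    | zero => simp only [map_zero, LinearMap.zero_apply, LinearMap.map_zero]
    | tmul u a =>
      simp only [tensorBil, lift.tmul, LinearMap.mk₂_apply, TensorProduct.map_tmul,
        compBil]
      simp [starLin, H.omega_natural u, mul_comm]
    | add f1 f2 ih1 ih2 =>
      simp only [map_add, LinearMap.add_apply] at ih1 ih2 ⊢
      rw [ih1, ih2]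
  omega_star X := by
    show tensorBil K R _ (H.omega (H.star X.base) ⊗ₜ[K] 1)
      (TensorProduct.map _ _ (H.omega X.base ⊗ₜ[K] 1)) = 𝟙 (H.star X.base) ⊗ₜ[K] 1
    rw [TensorProduct.map_tmul]
    simp only [tensorBil, lift.tmul, LinearMap.mk₂_apply, compBil]
    simp [starLin, H.omega_star]

/-- Scalar extension of a system of sesquilinear forms. -/
def extSys {ι : Type w} {Hs : ι → HermStructure C} [∀ i, HermKLinear K (Hs i)]
    (X : SysFormObj Hs) : SysFormObj (fun i => extHerm K R (Hs i)) where
  pt := ⟨X.pt⟩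
  form i := X.form i ⊗ₜ[K] 1

end Extension

end HermCat

/-!
Let `A = End (N ⊕ M)`, a finite-dimensional `K`-algebra, and let `p ∈ A` be the projection onto
`N`. Then `N ≅ M` iff `p` and `1 - p` are conjugate by a unit of `A`, and an isomorphism
`N_L ≅ M_L` makes `1 ⊗ p` and `1 ⊗ (1 - p)` conjugate in `L ⊗ A`. So it suffices to show that
conjugacy of two idempotents `p`, `q` descends from `L ⊗ A` to `A`.

The map `r ↦ q r p + (1 - q) r (1 - p)` projects onto the intertwiners `{r | r p = q r}`, and the
norm of the projection of a generic element of `A` is a polynomial over `K`. It is nonzero, as it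
does not vanish at the unit conjugating over `L`. If `K` is infinite, it has a nonzero value at a
`K`-point, which is a unit of `A` conjugating `p` to `q`. If `K` is finite, it has one at a point
over a finite extension `K'` of some degree `d`; the regular representation of `K'` then gives
`(A p)^d ≅ (A q)^d` as left `A`-modules, and the same for `1 - p`, `1 - q`. Counting homomorphisms
out of finite modules cancels the exponent `d` (Lovász), and the isomorphisms `A p ≅ A q` and
`A (1 - p) ≅ A (1 - q)` assemble into a unit conjugating `p` to `q`.
-/

open Function Matrix TensorProduct Algebra.TensorProduct MvPolynomial

section Cancellation

variable {R : Type*} [Ring R]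

instance LinearMap.finite_of_finite {X Y : Type*} [AddCommGroup X] [Module R X] [AddCommGroup Y]
    [Module R Y] [Finite X] [Finite Y] : Finite (X →ₗ[R] Y) :=
  .of_injective _ DFunLike.coe_injective

def Submodule.kerEqEquivInjective {X : Type*} [AddCommGroup X] [Module R X] (W : Submodule R X)
    (Y : Type*) [AddCommGroup Y] [Module R Y] :
    {f : X →ₗ[R] Y // LinearMap.ker f = W} ≃ {g : X ⧸ W →ₗ[R] Y // Injective g} where
  toFun f := ⟨W.liftQ f.1 f.2.ge, LinearMap.ker_eq_bot.mp (W.ker_liftQ_eq_bot' f.1 f.2.symm)⟩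
  invFun g := ⟨g.1 ∘ₗ W.mkQ, by
    rw [LinearMap.ker_comp, LinearMap.ker_eq_bot.mpr g.2, Submodule.comap_bot, W.ker_mkQ]⟩
  left_inv f := Subtype.ext (W.liftQ_mkQ f.1 _)
  right_inv g := Subtype.ext (W.linearMap_qext rfl)

theorem card_linearMap_eq_sum_card_injective (X Y : Type*) [AddCommGroup X] [Module R X]
    [AddCommGroup Y] [Module R Y] [Finite X] [Finite Y] [Fintype (Submodule R X)] :
    Nat.card (X →ₗ[R] Y) = ∑ W : Submodule R X, Nat.card {g : X ⧸ W →ₗ[R] Y // Injective g} := by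
  rw [← Nat.card_congr (Equiv.sigmaFiberEquiv fun f : X →ₗ[R] Y ↦ LinearMap.ker f),
    Nat.card_sigma]
  exact Finset.sum_congr rfl fun W _ ↦ Nat.card_congr (W.kerEqEquivInjective Y)

theorem card_injective_linearMap_congr {X X' Y Y' : Type*} [AddCommGroup X] [Module R X]
    [AddCommGroup X'] [Module R X'] [AddCommGroup Y] [Module R Y] [AddCommGroup Y'] [Module R Y']
    (e : X ≃ₗ[R] X') (e' : Y ≃ₗ[R] Y') :
    Nat.card {f : X →ₗ[R] Y // Injective f} = Nat.card {f : X' →ₗ[R] Y' // Injective f} :=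
  Nat.card_congr <| (LinearEquiv.arrowCongrAddEquiv e e').toEquiv.subtypeEquiv fun f ↦ by
    simp [EquivLike.injective_comp]

theorem Submodule.card_quotient_lt {X : Type*} [AddCommGroup X] [Module R X] [Finite X]
    {W : Submodule R X} (hW : W ≠ ⊥) : Nat.card (X ⧸ W) < Nat.card X := by
  have := Fintype.ofFinite X
  have := Fintype.ofFinite (X ⧸ W)
  obtain ⟨x, hxW, hx0⟩ := W.exists_mem_ne_zero_of_ne_bot hW
  rw [Nat.card_eq_fintype_card, Nat.card_eq_fintype_card]
  refine Fintype.card_lt_of_surjective_not_injective W.mkQ W.mkQ_surjective fun hinj ↦ hx0 ?_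
  exact hinj (by simpa [Submodule.Quotient.mk_eq_zero] using hxW)

variable {U V : Type u} [AddCommGroup U] [Module R U] [AddCommGroup V] [Module R V] [Finite U]
  [Finite V]

theorem card_injective_eq_of_card_linearMap_eq
    (h : ∀ (X : Type u) [AddCommGroup X] [Module R X] [Finite X],
      Nat.card (X →ₗ[R] U) = Nat.card (X →ₗ[R] V))
    (X : Type u) [AddCommGroup X] [Module R X] [Finite X] :
    Nat.card {f : X →ₗ[R] U // Injective f} = Nat.card {f : X →ₗ[R] V // Injective f} := by
  induction hX : Nat.card X using Nat.strong_induction_on generalizing X with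
  | _ n ih =>
    have : Fintype (Submodule R X) := Fintype.ofFinite _
    have hsum := h X
    -- all terms of the two sums with `W ≠ ⊥` agree by induction, hence so do those with `W = ⊥`
    rw [card_linearMap_eq_sum_card_injective, card_linearMap_eq_sum_card_injective,
      ← Finset.add_sum_erase _ _ (Finset.mem_univ ⊥),
      ← Finset.add_sum_erase _ _ (Finset.mem_univ ⊥),
      Finset.sum_congr rfl fun W hW ↦
        have : Finite (X ⧸ W) := .of_surjective _ W.mkQ_surjective
        ih _ (hX ▸ W.card_quotient_lt (Finset.ne_of_mem_erase hW)) (X ⧸ W) rfl,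
      add_left_inj] at hsum
    have hbot := Submodule.quotEquivOfEqBot (⊥ : Submodule R X) rfl
    rwa [card_injective_linearMap_congr hbot (.refl R U),
      card_injective_linearMap_congr hbot (.refl R V)] at hsum

theorem exists_injective_of_card_linearMap_eq
    (h : ∀ (X : Type u) [AddCommGroup X] [Module R X] [Finite X],
      Nat.card (X →ₗ[R] U) = Nat.card (X →ₗ[R] V)) :
    ∃ f : U →ₗ[R] V, Injective f := by
  have : Nonempty {f : U →ₗ[R] U // Injective f} := ⟨⟨.id, injective_id⟩⟩
  obtain ⟨⟨f, hf⟩⟩ := (Nat.card_pos_iff.mp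
    (card_injective_eq_of_card_linearMap_eq h U ▸ Nat.card_pos)).1
  exact ⟨f, hf⟩

theorem nonempty_linearEquiv_of_card_linearMap_eq
    (h : ∀ (X : Type u) [AddCommGroup X] [Module R X] [Finite X],
      Nat.card (X →ₗ[R] U) = Nat.card (X →ₗ[R] V)) :
    Nonempty (U ≃ₗ[R] V) := by
  obtain ⟨f, hf⟩ := exists_injective_of_card_linearMap_eq h
  obtain ⟨g, hg⟩ := exists_injective_of_card_linearMap_eq fun X _ _ _ ↦ (h X).symm
  exact ⟨.ofBijective f (hf.bijective_of_nat_card_le (Nat.card_le_card_of_injective g hg))⟩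

def LinearMap.piCodomainEquiv (X : Type*) [AddCommGroup X] [Module R X] (ι : Type*)
    (Y : Type*) [AddCommGroup Y] [Module R Y] : (X →ₗ[R] (ι → Y)) ≃ (ι → X →ₗ[R] Y) where
  toFun f i := LinearMap.proj i ∘ₗ f
  invFun := LinearMap.pi
  left_inv _ := rfl
  right_inv _ := rfl

theorem nonempty_linearEquiv_of_pi_linearEquiv {d : ℕ} (hd : d ≠ 0)
    (e : (Fin d → U) ≃ₗ[R] (Fin d → V)) : Nonempty (U ≃ₗ[R] V) := by
  refine nonempty_linearEquiv_of_card_linearMap_eq fun X _ _ _ ↦ Nat.pow_left_injective hd ?_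
  have hpow (Y : Type u) [AddCommGroup Y] [Module R Y] :
      Nat.card (X →ₗ[R] Y) ^ d = Nat.card (X →ₗ[R] (Fin d → Y)) := by
    rw [Nat.card_congr (LinearMap.piCodomainEquiv X (Fin d) Y), Nat.card_pi, Finset.prod_const,
      Finset.card_univ, Fintype.card_fin]
  simp only [hpow]
  exact Nat.card_congr (LinearEquiv.arrowCongrAddEquiv (.refl R X) e).toEquiv

end Cancellation

section Idempotents

variable {A : Type*} [Ring A]

def IsMurrayVonNeumannEquiv (p q : A) : Prop :=
  ∃ x y : A, x * y = p ∧ y * x = q ∧ p * x = x ∧ x * q = x ∧ q * y = y ∧ y * p = y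

theorem IsMurrayVonNeumannEquiv.symm {p q : A} (h : IsMurrayVonNeumannEquiv p q) :
    IsMurrayVonNeumannEquiv q p :=
  let ⟨x, y, hxy, hyx, hpx, hxq, hqy, hyp⟩ := h
  ⟨y, x, hyx, hxy, hqy, hyp, hpx, hxq⟩

theorem IsMurrayVonNeumannEquiv.isIdempotentElem_left {p q : A}
    (h : IsMurrayVonNeumannEquiv p q) : IsIdempotentElem p := by
  obtain ⟨x, y, hxy, -, hpx, -⟩ := h
  rw [IsIdempotentElem]
  nth_rw 2 [← hxy]
  rw [← mul_assoc, hpx, hxy]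

theorem IsIdempotentElem.mul_eq_zero_of_mul_eq {e a b : A} (he : IsIdempotentElem e)
    (ha : a * e = a) (hb : (1 - e) * b = b) : a * b = 0 := by
  rw [← ha, ← hb, mul_assoc, ← mul_assoc e, he.mul_one_sub_self, zero_mul, mul_zero]

theorem isConj_of_isMurrayVonNeumannEquiv {p q : A} (h : IsMurrayVonNeumannEquiv p q)
    (h' : IsMurrayVonNeumannEquiv (1 - p) (1 - q)) : IsConj p q := by
  have hp := h.isIdempotentElem_left
  have hq := h.symm.isIdempotentElem_left
  obtain ⟨x, y, hxy, hyx, hpx, hxq, hqy, hyp⟩ := h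
  obtain ⟨x', y', hxy', hyx', hpx', hxq', hqy', hyp'⟩ := h'
  have h₁ : y * x' = 0 := hp.mul_eq_zero_of_mul_eq hyp hpx'
  have h₂ : x * y' = 0 := hq.mul_eq_zero_of_mul_eq hxq hqy'
  have h₃ : y' * x = 0 := hp.one_sub.mul_eq_zero_of_mul_eq hyp' (by rwa [sub_sub_cancel])
  have h₄ : x' * y = 0 := hq.one_sub.mul_eq_zero_of_mul_eq hxq' (by rwa [sub_sub_cancel])
  have h₅ : y' * p = 0 := by rw [← hyp', mul_assoc, hp.one_sub_mul_self, mul_zero]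
  have h₆ : q * y' = 0 := by rw [← hqy', ← mul_assoc, hq.mul_one_sub_self, zero_mul]
  refine ⟨⟨y + y', x + x', ?_, ?_⟩, ?_⟩
  · simp only [add_mul, mul_add, hyx, h₁, h₃, hyx', add_zero, zero_add, add_sub_cancel]
  · simp only [add_mul, mul_add, hxy, h₂, h₄, hxy', add_zero, zero_add, add_sub_cancel]
  · simp only [SemiconjBy, add_mul, mul_add, hyp, hqy, h₅, h₆, add_zero]

theorem IsMurrayVonNeumannEquiv.isConj_one_sub {p : A}
    (h : IsMurrayVonNeumannEquiv p (1 - p)) : IsConj p (1 - p) :=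
  isConj_of_isMurrayVonNeumannEquiv h (by rw [sub_sub_cancel]; exact h.symm)

theorem IsConj.one_sub {p q : A} (h : IsConj p q) : IsConj (1 - p) (1 - q) :=
  let ⟨c, hc⟩ := h
  ⟨c, by rw [SemiconjBy, mul_sub, sub_mul, mul_one, one_mul, hc.eq]⟩

theorem IsIdempotentElem.mem_span_singleton_iff {e x : A} (he : IsIdempotentElem e) :
    x ∈ A ∙ e ↔ x * e = x := by
  refine ⟨fun h ↦ ?_, fun h ↦ Submodule.mem_span_singleton.mpr ⟨x, h⟩⟩
  obtain ⟨a, rfl⟩ := Submodule.mem_span_singleton.mp h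
  rw [smul_eq_mul, mul_assoc, he.eq]

theorem IsIdempotentElem.apply_span_singleton {M : Type*} [AddCommGroup M] [Module A M] {e : A}
    (he : IsIdempotentElem e) (φ : (A ∙ e) →ₗ[A] M) (a : A ∙ e) :
    φ a = (a : A) • φ ⟨e, Submodule.mem_span_singleton_self e⟩ := by
  rw [← map_smul]
  congr
  exact Subtype.ext (he.mem_span_singleton_iff.mp a.2).symm

theorem isMurrayVonNeumannEquiv_of_linearEquiv {p q : A} (hp : IsIdempotentElem p)
    (hq : IsIdempotentElem q) (φ : (A ∙ p) ≃ₗ[A] (A ∙ q)) : IsMurrayVonNeumannEquiv p q := by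
  set x : A ∙ q := φ ⟨p, Submodule.mem_span_singleton_self p⟩
  set y : A ∙ p := φ.symm ⟨q, Submodule.mem_span_singleton_self q⟩
  have hφ (a : A ∙ p) : (φ a : A) = a * x :=
    congrArg Subtype.val (hp.apply_span_singleton φ.toLinearMap a)
  have hφ' (b : A ∙ q) : (φ.symm b : A) = b * y :=
    congrArg Subtype.val (hq.apply_span_singleton φ.symm.toLinearMap b)
  refine ⟨x, y, ?_, ?_, (hφ ⟨p, _⟩).symm, hq.mem_span_singleton_iff.mp x.2,
    (hφ' ⟨q, _⟩).symm, hp.mem_span_singleton_iff.mp y.2⟩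
  · rw [← hφ', φ.symm_apply_apply]
  · rw [← hφ, φ.apply_symm_apply]

variable {n : Type*} [Fintype n] [DecidableEq n]

theorem vecMul_mul_eq_of_diagonal_mul {p q : A} {W : Matrix n n A}
    (hW : diagonal (fun _ ↦ p) * W = W * diagonal (fun _ ↦ q)) {v : n → A}
    (hv : ∀ i, v i * p = v i) (j : n) : (v ᵥ* W) j * q = (v ᵥ* W) j := by
  have hvp : v ᵥ* diagonal (fun _ ↦ p) = v := funext fun i ↦ by rw [vecMul_diagonal, hv]
  rw [← vecMul_diagonal (v ᵥ* W) (fun _ ↦ q), vecMul_vecMul, ← hW, ← vecMul_vecMul, hvp]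

def vecMulSpanSingleton {p q : A} (hp : IsIdempotentElem p) (W : Matrix n n A)
    (hW : diagonal (fun _ ↦ p) * W = W * diagonal (fun _ ↦ q)) :
    (n → A ∙ p) →ₗ[A] (n → A ∙ q) :=
  LinearMap.pi fun j ↦ LinearMap.codRestrict (A ∙ q)
    (LinearMap.proj j ∘ₗ W.vecMulLinear ∘ₗ (A ∙ p).subtype.compLeft n) fun v ↦
      Submodule.mem_span_singleton.mpr ⟨_, vecMul_mul_eq_of_diagonal_mul hW
        (fun i ↦ hp.mem_span_singleton_iff.mp (v i).2) j⟩

@[simp]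
theorem coe_vecMulSpanSingleton_apply {p q : A} (hp : IsIdempotentElem p) (W : Matrix n n A)
    (hW : diagonal (fun _ ↦ p) * W = W * diagonal (fun _ ↦ q)) (v : n → A ∙ p) (j : n) :
    (vecMulSpanSingleton hp W hW v j : A) = ((fun i ↦ (v i : A)) ᵥ* W) j :=
  rfl

theorem nonempty_pi_linearEquiv_of_isConj_diagonal {p q : A} (hp : IsIdempotentElem p)
    (hq : IsIdempotentElem q) (h : IsConj (diagonal fun _ : n ↦ p) (diagonal fun _ ↦ q)) :
    Nonempty ((n → A ∙ p) ≃ₗ[A] (n → A ∙ q)) := by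
  obtain ⟨c, hc⟩ := h
  refine ⟨.ofLinearMap (vecMulSpanSingleton hp ↑c⁻¹ hc.units_inv_symm_left.eq.symm)
    (vecMulSpanSingleton hq c hc.eq.symm) ?_ ?_⟩ <;>
  ext v j <;> simp [vecMul_vecMul]

end Idempotents

section FiniteField

variable {K A : Type*} [Field K] [Ring A] [Algebra K A]

def baseChangeToMatrix {L ι : Type*} [Field L] [Algebra K L] [Fintype ι] [DecidableEq ι]
    (b : Module.Basis ι K L) : L ⊗[K] A →ₐ[K] Matrix ι ι A :=
  lift ((Algebra.ofId K A).mapMatrix.comp (Algebra.leftMulMatrix b))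
    ((diagonalAlgHom K).comp (Pi.constAlgHom K ι A)) fun l a ↦ commute_iff_eq _ _ |>.mpr <| by
      ext i j
      simp [Algebra.commutes]

theorem baseChangeToMatrix_includeRight {L ι : Type*} [Field L] [Algebra K L] [Fintype ι]
    [DecidableEq ι] (b : Module.Basis ι K L) (r : A) :
    baseChangeToMatrix b (includeRight r) = diagonal fun _ ↦ r := by
  rw [baseChangeToMatrix, includeRight_apply, lift_tmul]
  simp

variable [Finite K] [FiniteDimensional K A] (L : Type*) [Field L] [Algebra K L]
  [FiniteDimensional K L] {p q : A}

theorem nonempty_linearEquiv_of_isConj_includeRight (hp : IsIdempotentElem p)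
    (hq : IsIdempotentElem q) (h : IsConj (includeRight p : L ⊗[K] A) (includeRight q)) :
    Nonempty ((A ∙ p) ≃ₗ[A] (A ∙ q)) := by
  have hd : IsConj (diagonal fun _ : Fin (Module.finrank K L) ↦ p) (diagonal fun _ ↦ q) := by
    simpa only [MonoidHom.coe_coe, baseChangeToMatrix_includeRight] using MonoidHom.map_isConj
      (MonoidHomClass.toMonoidHom (baseChangeToMatrix (A := A) (Module.finBasis K L))) h
  obtain ⟨e⟩ := nonempty_pi_linearEquiv_of_isConj_diagonal hp hq hd
  have : Finite A := Module.finite_of_finite K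
  exact nonempty_linearEquiv_of_pi_linearEquiv Module.finrank_pos.ne' e

theorem isConj_of_isConj_includeRight_of_finite (hp : IsIdempotentElem p)
    (hq : IsIdempotentElem q) (h : IsConj (includeRight p : L ⊗[K] A) (includeRight q)) :
    IsConj p q := by
  have h' : IsConj (includeRight (1 - p) : L ⊗[K] A) (includeRight (1 - q)) := by
    simpa only [map_sub, map_one] using h.one_sub
  obtain ⟨e⟩ := nonempty_linearEquiv_of_isConj_includeRight L hp hq h
  obtain ⟨e'⟩ := nonempty_linearEquiv_of_isConj_includeRight L hp.one_sub hq.one_sub h'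
  exact isConj_of_isMurrayVonNeumannEquiv (isMurrayVonNeumannEquiv_of_linearEquiv hp hq e)
    (isMurrayVonNeumannEquiv_of_linearEquiv hp.one_sub hq.one_sub e')

end FiniteField

section IntertwinerProj

variable (R : Type*) [CommSemiring R] {A : Type*} [Ring A] [Algebra R A]

def intertwinerProj (p q : A) : A →ₗ[R] A :=
  LinearMap.mulLeftRight R (q, p) + LinearMap.mulLeftRight R (1 - q, 1 - p)

variable {R}

theorem intertwinerProj_apply (p q r : A) :
    intertwinerProj R p q r = q * r * p + (1 - q) * r * (1 - p) :=
  rfl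

theorem intertwinerProj_mul {p q : A} (hp : IsIdempotentElem p) (hq : IsIdempotentElem q)
    (r : A) : intertwinerProj R p q r * p = q * intertwinerProj R p q r := by
  simp only [intertwinerProj_apply, add_mul, mul_add, mul_assoc, hp.eq, hp.one_sub_mul_self]
  simp only [← mul_assoc, hq.eq, hq.mul_one_sub_self]
  simp

theorem intertwinerProj_eq_self {p q r : A} (hq : IsIdempotentElem q) (h : r * p = q * r) :
    intertwinerProj R p q r = r := by
  simp only [intertwinerProj_apply, mul_sub, sub_mul, one_mul, mul_one, mul_assoc, h]
  simp only [← mul_assoc, hq.eq]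
  abel

theorem map_intertwinerProj {S B : Type*} [CommSemiring S] [Ring B] [Algebra S B] (f : A →+* B)
    (p q r : A) : f (intertwinerProj R p q r) = intertwinerProj S (f p) (f q) (f r) := by
  simp [intertwinerProj_apply]

end IntertwinerProj

section Descent

variable {K A : Type*} [Field K] [Ring A] [Algebra K A] {n : ℕ}

theorem leftMulMatrix_basis_one_tmul {J : Type*} [CommRing J] [Algebra K J]
    (b : Module.Basis (Fin n) K A) (r : A) :
    Algebra.leftMulMatrix (basis J b) ((1 : J) ⊗ₜ r) =
      (Algebra.leftMulMatrix b r).map (algebraMap K J) := by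
  ext i j
  simp [Algebra.leftMulMatrix_eq_repr_mul, basis_apply, basis_repr_tmul]

def intertwinerNormPoly (b : Module.Basis (Fin n) K A) (p q : A) : MvPolynomial (Fin n) K :=
  (Matrix.of fun i j ↦
    ∑ k, X k * C (Algebra.leftMulMatrix b (intertwinerProj K p q (b k)) i j)).det

theorem aeval_intertwinerNormPoly {J : Type*} [CommRing J] [Algebra K J]
    (b : Module.Basis (Fin n) K A) (p q : A) (c : Fin n → J) :
    aeval c (intertwinerNormPoly b p q) =
      Algebra.norm J (intertwinerProj J (includeRight p) (includeRight q)
        (∑ k, c k • basis J b k)) := by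
  have : intertwinerProj J (includeRight p) (includeRight q) (∑ k, c k • basis J b k) =
      ∑ k, c k • includeRight (intertwinerProj K p q (b k)) := by
    simp only [map_sum, map_smul, basis_apply, ← includeRight_apply]
    simp only [← AlgHom.coe_toRingHom, map_intertwinerProj (R := K) (S := J)]
  rw [this, Algebra.norm_eq_matrix_det (basis J b), intertwinerNormPoly, AlgHom.map_det]
  congr 1
  ext i j
  simp [Matrix.sum_apply, leftMulMatrix_basis_one_tmul]

theorem intertwinerNormPoly_ne_zero {L : Type*} [CommRing L] [Nontrivial L] [Algebra K L]
    (b : Module.Basis (Fin n) K A) {p q : A} (hq : IsIdempotentElem q)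
    (h : IsConj (includeRight p : L ⊗[K] A) (includeRight q)) :
    intertwinerNormPoly b p q ≠ 0 := by
  obtain ⟨u, hu⟩ := h
  have hu' : intertwinerProj L (includeRight p) (includeRight q)
      (∑ k, (basis L b).repr u k • basis L b k) = u := by
    rw [(basis L b).sum_repr, intertwinerProj_eq_self (hq.map includeRight) hu.eq]
  intro h0
  have := aeval_intertwinerNormPoly b p q ((basis L b).repr u)
  rw [h0, map_zero, hu'] at this
  exact (u.isUnit.map (Algebra.norm L)).ne_zero this.symm

theorem isConj_includeRight_of_aeval_ne_zero {J : Type*} [Field J] [Algebra K J]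
    (b : Module.Basis (Fin n) K A) {p q : A} (hp : IsIdempotentElem p) (hq : IsIdempotentElem q)
    {c : Fin n → J} (hc : aeval c (intertwinerNormPoly b p q) ≠ 0) :
    IsConj (includeRight p : J ⊗[K] A) (includeRight q) := by
  have := Module.Finite.of_basis (basis J b)
  set w := intertwinerProj J (includeRight p) (includeRight q) (∑ k, c k • basis J b k)
  have hw : IsUnit w := by
    rw [← Algebra.lmul_isUnit_iff (R := J), LinearMap.isUnit_iff_isUnit_det, ← Algebra.norm_apply,
      ← aeval_intertwinerNormPoly]
    exact hc.isUnit
  exact ⟨hw.unit, intertwinerProj_mul (hp.map includeRight) (hq.map includeRight) _⟩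

theorem MvPolynomial.exists_finiteDimensional_aeval_ne_zero {σ : Type*} [Finite σ]
    {P : MvPolynomial σ K} (hP : P ≠ 0) :
    ∃ K' : IntermediateField K (AlgebraicClosure K), FiniteDimensional K K' ∧
      ∃ c : σ → K', aeval c P ≠ 0 := by
  obtain ⟨c, hc⟩ : ∃ c : σ → AlgebraicClosure K, aeval c P ≠ 0 := by
    by_contra! h
    refine hP (MvPolynomial.map_injective _ (algebraMap K (AlgebraicClosure K)).injective ?_)
    exact MvPolynomial.funext fun c ↦ by simpa [MvPolynomial.eval_map, aeval_def] using h c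
  set K' := IntermediateField.adjoin K (Set.range c)
  let c' (i : σ) : K' := ⟨c i, IntermediateField.subset_adjoin K _ ⟨i, rfl⟩⟩
  refine ⟨K', IntermediateField.finiteDimensional_adjoin
    fun x _ ↦ (Algebra.IsAlgebraic.isAlgebraic x).isIntegral, c', fun h ↦ hc ?_⟩
  have := comp_aeval_apply (f := c') K'.val P
  rw [h, map_zero] at this
  exact this.symm

theorem isConj_of_isConj_includeRight [FiniteDimensional K A] {L : Type*} [CommRing L]
    [Nontrivial L] [Algebra K L] {p q : A} (hp : IsIdempotentElem p) (hq : IsIdempotentElem q)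
    (h : IsConj (includeRight p : L ⊗[K] A) (includeRight q)) : IsConj p q := by
  set b := Module.finBasis K A
  have hP := intertwinerNormPoly_ne_zero b hq h
  rcases finite_or_infinite K with hK | hK
  · obtain ⟨K', _, c, hc⟩ := exists_finiteDimensional_aeval_ne_zero hP
    exact isConj_of_isConj_includeRight_of_finite K' hp hq
      (isConj_includeRight_of_aeval_ne_zero b hp hq hc)
  · obtain ⟨c, hc⟩ : ∃ c, eval c (intertwinerNormPoly b p q) ≠ 0 := by
      by_contra! h0
      exact hP (MvPolynomial.funext fun c ↦ by simpa using h0 c)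
    have := isConj_includeRight_of_aeval_ne_zero b hp hq (c := c) (by rwa [aeval_eq_eval])
    simpa using
      MonoidHom.map_isConj (MonoidHomClass.toMonoidHom (Algebra.TensorProduct.lid K A)) this

end Descent

namespace HermCat

section

variable {C : Type u} [Category.{v} C] [Preadditive C]

/-- `End (N ⊕ M)` as `2 × 2` matrices of morphisms, multiplied in diagrammatic order:
`r * s` is the matrix of `r ≫ s`. -/
abbrev BiprodEnd (N M : C) : Type v := ((N ⟶ N) × (N ⟶ M)) × ((M ⟶ N) × (M ⟶ M))

namespace BiprodEnd

variable {N M : C}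

instance : Mul (BiprodEnd N M) where
  mul r s := ((r.1.1 ≫ s.1.1 + r.1.2 ≫ s.2.1, r.1.1 ≫ s.1.2 + r.1.2 ≫ s.2.2),
    (r.2.1 ≫ s.1.1 + r.2.2 ≫ s.2.1, r.2.1 ≫ s.1.2 + r.2.2 ≫ s.2.2))

instance : One (BiprodEnd N M) where
  one := ((𝟙 N, 0), (0, 𝟙 M))

@[simp] theorem mul_fst_fst (r s : BiprodEnd N M) :
    (r * s).1.1 = r.1.1 ≫ s.1.1 + r.1.2 ≫ s.2.1 := rfl
@[simp] theorem mul_fst_snd (r s : BiprodEnd N M) :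
    (r * s).1.2 = r.1.1 ≫ s.1.2 + r.1.2 ≫ s.2.2 := rfl
@[simp] theorem mul_snd_fst (r s : BiprodEnd N M) :
    (r * s).2.1 = r.2.1 ≫ s.1.1 + r.2.2 ≫ s.2.1 := rfl
@[simp] theorem mul_snd_snd (r s : BiprodEnd N M) :
    (r * s).2.2 = r.2.1 ≫ s.1.2 + r.2.2 ≫ s.2.2 := rfl
@[simp] theorem one_fst : (1 : BiprodEnd N M).1 = (𝟙 N, 0) := rfl
@[simp] theorem one_snd : (1 : BiprodEnd N M).2 = (0, 𝟙 M) := rfl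

instance : Ring (BiprodEnd N M) where
  mul_assoc _ _ _ := by ext <;> simp [Preadditive.add_comp, Preadditive.comp_add] <;> abel
  one_mul _ := by ext <;> simp
  mul_one _ := by ext <;> simp
  left_distrib _ _ _ := by ext <;> simp [Preadditive.comp_add] <;> abel
  right_distrib _ _ _ := by ext <;> simp [Preadditive.add_comp] <;> abel
  zero_mul _ := by ext <;> simp
  mul_zero _ := by ext <;> simp

instance {K : Type*} [CommRing K] [Linear K C] : Algebra K (BiprodEnd N M) :=
  Algebra.ofModule (fun _ _ _ ↦ by ext <;> simp [smul_add])
    (fun _ _ _ ↦ by ext <;> simp [smul_add])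

def fstIdem (N M : C) : BiprodEnd N M := ((𝟙 N, 0), (0, 0))

@[simp] theorem fstIdem_fst : (fstIdem N M).1 = (𝟙 N, 0) := rfl
@[simp] theorem fstIdem_snd : (fstIdem N M).2 = (0, 0) := rfl

theorem isIdempotentElem_fstIdem : IsIdempotentElem (fstIdem N M) := by
  ext <;> simp

theorem nonempty_iso_of_isConj (h : IsConj (fstIdem N M) (1 - fstIdem N M)) :
    Nonempty (N ≅ M) := by
  obtain ⟨c, hc⟩ := h
  have hNN : (c : BiprodEnd N M).1.1 = 0 := by simpa using congrArg (·.1.1) hc.eq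
  have hMM : (↑c⁻¹ : BiprodEnd N M).2.2 = 0 := by
    simpa using congrArg (·.2.2) hc.units_inv_symm_left.eq
  refine ⟨⟨(c : BiprodEnd N M).1.2, (↑c⁻¹ : BiprodEnd N M).2.1, ?_, ?_⟩⟩
  · have := congrArg (·.1.1) c.mul_inv
    simpa only [mul_fst_fst, hNN, zero_comp, zero_add, one_fst] using this
  · have := congrArg (·.2.2) c.inv_mul
    simpa only [mul_snd_snd, hMM, zero_comp, add_zero, one_snd] using this

variable (K : Type*) [CommRing K] [Linear K C]

def inNN : (N ⟶ N) →ₗ[K] BiprodEnd N M := .inl K _ _ ∘ₗ .inl K _ _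
def inNM : (N ⟶ M) →ₗ[K] BiprodEnd N M := .inl K _ _ ∘ₗ .inr K _ _
def inMN : (M ⟶ N) →ₗ[K] BiprodEnd N M := .inr K _ _ ∘ₗ .inl K _ _
def inMM : (M ⟶ M) →ₗ[K] BiprodEnd N M := .inr K _ _ ∘ₗ .inr K _ _

end BiprodEnd

end

section ToBaseChange

variable (K : Type*) [CommRing K] (L : Type*) [CommRing L] [Algebra K L]
  {A : Type*} [Ring A] [Algebra K A]

def toBaseChange {H : Type*} [AddCommGroup H] [Module K H] (em : H →ₗ[K] A) :
    H ⊗[K] L →ₗ[K] L ⊗[K] A :=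
  (TensorProduct.comm K A L).toLinearMap ∘ₗ em.rTensor L

variable {K L}

@[simp]
theorem toBaseChange_tmul {H : Type*} [AddCommGroup H] [Module K H] (em : H →ₗ[K] A) (f : H)
    (l : L) : toBaseChange K L em (f ⊗ₜ l) = l ⊗ₜ em f :=
  rfl

theorem toBaseChange_tensorBil {H₁ H₂ H₃ : Type*} [AddCommGroup H₁] [Module K H₁]
    [AddCommGroup H₂] [Module K H₂] [AddCommGroup H₃] [Module K H₃]
    {em₁ : H₁ →ₗ[K] A} {em₂ : H₂ →ₗ[K] A} (em₃ : H₃ →ₗ[K] A) {B : H₁ →ₗ[K] H₂ →ₗ[K] H₃}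
    (hB : ∀ u v, em₃ (B u v) = em₁ u * em₂ v) (a : H₁ ⊗[K] L) (b : H₂ ⊗[K] L) :
    toBaseChange K L em₃ (tensorBil K L B a b) =
      toBaseChange K L em₁ a * toBaseChange K L em₂ b := by
  induction a with
  | zero => simp
  | add a a' ha ha' => simp [ha, ha', add_mul]
  | tmul u l =>
    induction b with
    | zero => simp
    | add b b' hb hb' => simp [hb, hb', mul_add]
    | tmul v l' => simp [tensorBil, hB]

theorem includeRight_mul_toBaseChange {H : Type*} [AddCommGroup H] [Module K H]
    {em : H →ₗ[K] A} {e : A} (he : ∀ f, e * em f = em f) (a : H ⊗[K] L) :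
    includeRight e * toBaseChange K L em a = toBaseChange K L em a := by
  induction a with
  | zero => simp
  | add a a' ha ha' => rw [map_add, mul_add, ha, ha']
  | tmul f l => simp [he]

theorem toBaseChange_mul_includeRight {H : Type*} [AddCommGroup H] [Module K H]
    {em : H →ₗ[K] A} {e : A} (he : ∀ f, em f * e = em f) (a : H ⊗[K] L) :
    toBaseChange K L em a * includeRight e = toBaseChange K L em a := by
  induction a with
  | zero => simp
  | add a a' ha ha' => rw [map_add, add_mul, ha, ha']
  | tmul f l => simp [he]

end ToBaseChange

open BiprodEnd in
theorem isConj_includeRight_fstIdem_of_iso {C : Type u} [Category.{v} C] [Preadditive C]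
    {K : Type*} [CommRing K] [Linear K C] {L : Type*} [CommRing L] [Algebra K L] {N M : C}
    (e : (extFunctor K L).obj N ≅ (extFunctor K L).obj M) :
    IsConj (includeRight (fstIdem N M) : L ⊗[K] BiprodEnd N M)
      (includeRight (1 - fstIdem N M)) := by
  obtain ⟨f, g, hfg, hgf⟩ : ∃ (f : (N ⟶ M) ⊗[K] L) (g : (M ⟶ N) ⊗[K] L),
      tensorBil K L (compBil K N M N) f g = 𝟙 N ⊗ₜ 1 ∧
        tensorBil K L (compBil K M N M) g f = 𝟙 M ⊗ₜ 1 :=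
    ⟨e.hom, e.inv, e.hom_inv_id, e.inv_hom_id⟩
  have h : IsMurrayVonNeumannEquiv (includeRight (fstIdem N M) : L ⊗[K] BiprodEnd N M)
      (includeRight (1 - fstIdem N M)) := by
    refine ⟨toBaseChange K L (inNM K) f, toBaseChange K L (inMN K) g, ?_, ?_,
      includeRight_mul_toBaseChange (fun _ ↦ by ext <;> simp [inNM]) _,
      toBaseChange_mul_includeRight (fun _ ↦ by ext <;> simp [inNM]) _,
      includeRight_mul_toBaseChange (fun _ ↦ by ext <;> simp [inMN]) _,
      toBaseChange_mul_includeRight (fun _ ↦ by ext <;> simp [inMN]) _⟩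
    · rw [← toBaseChange_tensorBil (A := BiprodEnd N M) (em₁ := inNM K) (em₂ := inMN K)
        (B := compBil K N M N) (inNN K) fun u v ↦ by ext <;> simp [inNM, inMN, inNN, compBil],
        hfg]
      rfl
    · rw [← toBaseChange_tensorBil (A := BiprodEnd N M) (em₁ := inMN K) (em₂ := inNM K)
        (B := compBil K M N M) (inMM K) fun u v ↦ by ext <;> simp [inNM, inMN, inMM, compBil],
        hgf, toBaseChange_tmul, includeRight_apply]
      congr 1
      ext <;> simp [inMM]
  rw [map_sub, map_one] at h ⊢
  exact h.isConj_one_sub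

/-- **Statement 18.** Let `L/K` be a field extension and `C` an additive `K`-category with
finite-dimensional Hom-spaces.  Then two objects of `C` are isomorphic iff their scalar
extensions are isomorphic in `C ⊗_K L`. -/
theorem iso_iff_iso_of_extension (K : Type ku) [Field K] (L : Type rv) [Field L]
    [Algebra K L] {C : Type u} [Category.{v} C] [Preadditive C] [CategoryTheory.Linear K C]
    (hfin : ∀ X Y : C, FiniteDimensional K (X ⟶ Y)) (N M : C) :
    Nonempty (N ≅ M) ↔
      Nonempty ((extFunctor K L).obj N ≅ (extFunctor K L (C := C)).obj M) := by
  refine ⟨fun ⟨e⟩ ↦ ⟨(extFunctor K L).mapIso e⟩, fun ⟨e⟩ ↦ ?_⟩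
  have := hfin N N
  have := hfin N M
  have := hfin M N
  have := hfin M M
  exact BiprodEnd.nonempty_iso_of_isConj <| isConj_of_isConj_includeRight
    BiprodEnd.isIdempotentElem_fstIdem BiprodEnd.isIdempotentElem_fstIdem.one_sub
    (isConj_includeRight_fstIdem_of_iso e)

end HermCat
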